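/- Let m ≥ 1 and let S : M_m(ℂ) → M_m(ℂ) be a bijective linear map satisfying S(a b* c) = S(c) S(b)* S(a) for all a, b, c ∈ M_m(ℂ) (a TRO anti-isomorphism). Then for every n ≥ 1 the operator norm of the n-th amplification S_n : M_n(M_m(ℂ)) → M_n(M_m(ℂ)) equals min(n, m). -/

import Mathlib

/-!
Write `E : Mₙ(Mₘ) ≃⋆ M_{n×m}` for the block identification; by uniqueness of C*-norms,
`ν = ‖E ·‖`. A TRO anti-isomorphism has the form `S b = u ψ(bᵀ)` with `u = S 1` unitary and `ψ`
a `*`-automorphism, so `S_n x = diag(u) ψ_n(xᵗ)` with `xᵗ` the blockwise transpose, and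
`ν (S_n x) = ‖θ (E x)‖` for the partial transpose `θ`. Pairing `θ y` with vectors `f, g` splits
into the pairings of `y` with `f_k ⊗ e_l` and `g_l ⊗ e_k`, where `f_k, g_l` are slices whose norms
have `ℓ¹`-sums at most `√m ‖f‖` and `√m ‖g‖`; hence `‖θ y‖ ≤ m ‖y‖`, and transposing the whole
matrix gives `‖θ y‖ ≤ n ‖y‖`. The bound is attained at the permutation matrix `P` of the swap
`(i, k) ↦ (k, i)` on the square corner of size `min n m`: for `ζ = ∑ eᵢ ⊗ eᵢ` one has
`⟪ζ, θ P ζ⟫ = ‖ζ‖⁴` and `‖ζ‖² = min n m`.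
-/

/-- A function `ν` on a complex `*`-algebra is a C*-norm if it is a norm which is
submultiplicative and satisfies the C*-identity `ν (x* x) = ν x ^ 2`.  On `Mₙ(A)`
(`A` a C*-algebra) such a norm exists and is unique: it is "the" C*-norm. -/
def IsCStarNorm {M : Type*} [NonUnitalRing M] [Module ℂ M] [Star M] (ν : M → ℝ) : Prop :=
  (∀ x, ν x = 0 ↔ x = 0) ∧
  (∀ x y, ν (x + y) ≤ ν x + ν y) ∧
  (∀ (c : ℂ) (x), ν (c • x) = ‖c‖ * ν x) ∧
  (∀ x y, ν (x * y) ≤ ν x * ν y) ∧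
  (∀ x, ν (star x * x) = ν x * ν x)

open Finset Matrix WithLp
open scoped Matrix.Norms.L2Operator

theorem IsCStarNorm.apply_eq_norm {A B : Type*} [Ring A] [StarRing A] [Algebra ℂ A]
    [StarModule ℂ A] [FiniteDimensional ℂ A] [CStarAlgebra B] {ν : A → ℝ} (hν : IsCStarNorm ν)
    (e : A ≃⋆ₐ[ℂ] B) (x : A) : ν x = ‖e x‖ := by
  obtain ⟨h0, hadd, hsmul, hmul, hstar⟩ := hν
  let _ : NormedAddCommGroup A := AddGroupNorm.toNormedAddCommGroup
    { toFun := ν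
      map_zero' := (h0 0).2 rfl
      add_le' := hadd
      neg' := fun x => by simpa using hsmul (-1) x
      eq_zero_of_map_eq_zero' := fun x => (h0 x).1 }
  let _ : NormedRing A := { ‹NormedAddCommGroup A›, ‹Ring A› with norm_mul_le := hmul }
  let _ : NormedAlgebra ℂ A := { ‹Algebra ℂ A› with norm_smul_le := fun c x => (hsmul c x).le }
  let _ : CStarRing A := ⟨fun x => (hstar x).ge⟩
  let _ : CompleteSpace A := FiniteDimensional.complete ℂ A
  let _ : CStarAlgebra A := {}
  exact (StarAlgEquiv.norm_map e x).symm

namespace Matrix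

section L2OpNorm

variable {m n : Type*} [Fintype m] [Fintype n]

lemma star_dotProduct_mulVec_eq_inner (A : Matrix m n ℂ) (x : EuclideanSpace ℂ m)
    (y : EuclideanSpace ℂ n) :
    star (ofLp x) ⬝ᵥ A *ᵥ ofLp y = inner ℂ x ((EuclideanSpace.equiv m ℂ).symm (A *ᵥ ofLp y)) := by
  rw [EuclideanSpace.inner_eq_star_dotProduct, dotProduct_comm]
  rfl

variable [DecidableEq n]

lemma norm_star_dotProduct_mulVec_le (A : Matrix m n ℂ) (x : EuclideanSpace ℂ m)
    (y : EuclideanSpace ℂ n) : ‖star (ofLp x) ⬝ᵥ A *ᵥ ofLp y‖ ≤ ‖A‖ * (‖x‖ * ‖y‖) := by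
  rw [star_dotProduct_mulVec_eq_inner]
  calc _ ≤ ‖x‖ * (‖A‖ * ‖y‖) :=
        (norm_inner_le_norm _ _).trans (by gcongr; exact A.l2_opNorm_mulVec y)
    _ = ‖A‖ * (‖x‖ * ‖y‖) := by ring

lemma l2_opNorm_le_of_norm_star_dotProduct_mulVec_le (A : Matrix m n ℂ) {C : ℝ} (hC : 0 ≤ C)
    (h : ∀ (x : EuclideanSpace ℂ m) (y : EuclideanSpace ℂ n),
      ‖star (ofLp x) ⬝ᵥ A *ᵥ ofLp y‖ ≤ C * (‖x‖ * ‖y‖)) : ‖A‖ ≤ C := by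
  rw [l2_opNorm_def]
  refine ContinuousLinearMap.opNorm_le_bound _ hC fun y => ?_
  set Ay : EuclideanSpace ℂ m := (EuclideanSpace.equiv m ℂ).symm (A *ᵥ ofLp y)
  have hAy : ‖Ay‖ * ‖Ay‖ ≤ ‖Ay‖ * (C * ‖y‖) := by
    have := h Ay y
    rw [star_dotProduct_mulVec_eq_inner, inner_self_eq_norm_sq_to_K, norm_pow,
      RCLike.norm_ofReal, abs_norm] at this
    linarith
  rcases (norm_nonneg Ay).eq_or_lt with h0 | h0
  · change ‖Ay‖ ≤ C * ‖y‖
    rw [← h0]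
    positivity
  · exact le_of_mul_le_mul_left hAy h0

variable [DecidableEq m]

variable (n) in
def transposeStarAlgEquiv (R : Type*) [CommSemiring R] [StarRing R] :
    Matrix n n R ≃⋆ₐ[R] (Matrix n n R)ᵐᵒᵖ :=
  .ofAlgEquiv (transposeAlgEquiv n R R) fun _ => rfl

lemma l2_opNorm_transpose (A : Matrix n n ℂ) : ‖Aᵀ‖ = ‖A‖ :=
  StarAlgEquiv.norm_map (transposeStarAlgEquiv n ℂ) A

def reindexStarAlgEquiv (R : Type*) [CommSemiring R] [StarRing R] (e : m ≃ n) :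
    Matrix m m R ≃⋆ₐ[R] Matrix n n R :=
  .ofAlgEquiv (reindexAlgEquiv R R e) fun _ => rfl

lemma l2_opNorm_reindex (e : m ≃ n) (A : Matrix m m ℂ) : ‖reindex e e A‖ = ‖A‖ :=
  StarAlgEquiv.norm_map (reindexStarAlgEquiv ℂ e) A

end L2OpNorm

section PartialTranspose

variable {α β R : Type*}

def partialTranspose (y : Matrix (α × β) (α × β) R) : Matrix (α × β) (α × β) R :=
  of fun p q => y (p.1, q.2) (q.1, p.2)

lemma partialTranspose_eq_transpose_reindex (y : Matrix (α × β) (α × β) R) :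
    partialTranspose y = (reindex (Equiv.prodComm β α) (Equiv.prodComm β α)
      (partialTranspose (reindex (Equiv.prodComm α β) (Equiv.prodComm α β) y)))ᵀ :=
  rfl

def tensorSingle [DecidableEq β] [Zero R] (v : α → R) (l : β) : α × β → R :=
  fun p => if p.2 = l then v p.1 else 0

variable [Fintype α] [Fintype β]

lemma star_dotProduct_partialTranspose_mulVec [DecidableEq β] [CommSemiring R] [StarRing R]
    (y : Matrix (α × β) (α × β) R) (f g : α × β → R) :
    star f ⬝ᵥ partialTranspose y *ᵥ g = ∑ k, ∑ l,
      star (tensorSingle (fun i => f (i, k)) l) ⬝ᵥ y *ᵥ tensorSingle (fun j => g (j, l)) k := by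
  simp only [dotProduct, mulVec, tensorSingle, partialTranspose, of_apply, Fintype.sum_prod_type,
    Pi.star_apply, apply_ite star, star_zero, ite_mul, zero_mul, mul_ite, mul_zero, sum_ite_eq',
    mem_univ, if_true, mul_sum, sum_ite_irrel, sum_const_zero]
  rw [sum_comm]
  refine sum_congr rfl fun k _ => ?_
  rw [sum_comm (γ := β)]
  exact sum_congr rfl fun i _ => sum_comm

lemma norm_toLp_tensorSingle [DecidableEq β] (v : α → ℂ) (l : β) :
    ‖toLp 2 (tensorSingle v l)‖ = ‖toLp 2 v‖ := by
  simp [EuclideanSpace.norm_eq, tensorSingle, Fintype.sum_prod_type, apply_ite]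

lemma sum_norm_toLp_slice_le (f : EuclideanSpace ℂ (α × β)) :
    ∑ k, ‖toLp 2 (fun i => f (i, k))‖ ≤ √(Fintype.card β) * ‖f‖ := by
  have hsq : ∑ k, ‖toLp 2 (fun i => f (i, k))‖ ^ 2 = ‖f‖ ^ 2 := by
    simp only [EuclideanSpace.norm_sq_eq, Fintype.sum_prod_type_right]
  calc ∑ k, ‖toLp 2 (fun i => f (i, k))‖
      ≤ √(Fintype.card β * ∑ k, ‖toLp 2 (fun i => f (i, k))‖ ^ 2) :=
        Real.le_sqrt_of_sq_le (card_univ (α := β) ▸ sq_sum_le_card_mul_sum_sq)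
    _ = √(Fintype.card β) * ‖f‖ := by
        rw [hsq, Real.sqrt_mul (Nat.cast_nonneg _), Real.sqrt_sq (norm_nonneg f)]

variable [DecidableEq α] [DecidableEq β]

lemma l2_opNorm_partialTranspose_le_card_right (y : Matrix (α × β) (α × β) ℂ) :
    ‖partialTranspose y‖ ≤ Fintype.card β * ‖y‖ := by
  refine l2_opNorm_le_of_norm_star_dotProduct_mulVec_le _ (by positivity) fun f g => ?_
  rw [star_dotProduct_partialTranspose_mulVec]
  calc _ ≤ ∑ k, ∑ l, ‖y‖ * (‖toLp 2 (fun i => f (i, k))‖ * ‖toLp 2 (fun j => g (j, l))‖) := by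
        refine (norm_sum_le _ _).trans (sum_le_sum fun k _ =>
          (norm_sum_le _ _).trans (sum_le_sum fun l _ => ?_))
        have := y.norm_star_dotProduct_mulVec_le (toLp 2 (tensorSingle (fun i => f (i, k)) l))
          (toLp 2 (tensorSingle (fun j => g (j, l)) k))
        rwa [norm_toLp_tensorSingle, norm_toLp_tensorSingle] at this
    _ = ‖y‖ * ((∑ k, ‖toLp 2 (fun i => f (i, k))‖) * ∑ l, ‖toLp 2 (fun j => g (j, l))‖) := by
        simp_rw [sum_mul_sum, mul_sum]
    _ ≤ ‖y‖ * ((√(Fintype.card β) * ‖f‖) * (√(Fintype.card β) * ‖g‖)) := by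
        gcongr
        · exact sum_norm_toLp_slice_le f
        · exact sum_norm_toLp_slice_le g
    _ = Fintype.card β * ‖y‖ * (‖f‖ * ‖g‖) := by
        rw [mul_mul_mul_comm, Real.mul_self_sqrt (Nat.cast_nonneg _)]
        ring

lemma l2_opNorm_partialTranspose_le_card_left (y : Matrix (α × β) (α × β) ℂ) :
    ‖partialTranspose y‖ ≤ Fintype.card α * ‖y‖ := by
  rw [partialTranspose_eq_transpose_reindex, l2_opNorm_transpose, l2_opNorm_reindex]
  simpa only [l2_opNorm_reindex] using l2_opNorm_partialTranspose_le_card_right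
    (reindex (Equiv.prodComm α β) (Equiv.prodComm α β) y)

lemma l2_opNorm_partialTranspose_le_min (y : Matrix (α × β) (α × β) ℂ) :
    ‖partialTranspose y‖ ≤ min (Fintype.card α : ℝ) (Fintype.card β) * ‖y‖ := by
  rw [min_mul_of_nonneg _ _ (norm_nonneg y)]
  exact le_min (l2_opNorm_partialTranspose_le_card_left y)
    (l2_opNorm_partialTranspose_le_card_right y)

variable (α β R) in
def compStarAlgEquiv [CommSemiring R] [StarRing R] :
    Matrix α α (Matrix β β R) ≃⋆ₐ[R] Matrix (α × β) (α × β) R :=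
  .ofAlgEquiv (compAlgEquiv α β R R) fun _ => rfl

lemma compStarAlgEquiv_map_transpose [CommSemiring R] [StarRing R]
    (x : Matrix α α (Matrix β β R)) :
    compStarAlgEquiv α β R (x.map transpose) = partialTranspose (compStarAlgEquiv α β R x) :=
  rfl

end PartialTranspose

lemma diagonal_mem_unitary {n A : Type*} [Fintype n] [DecidableEq n] [Semiring A] [StarRing A]
    {d : n → A} (hd : ∀ i, d i ∈ unitary A) : diagonal d ∈ unitary (Matrix n n A) := by
  simp [Unitary.mem_iff, star_eq_conjTranspose, diagonal_conjTranspose, diagonal_mul_diagonal,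
    Unitary.star_mul_self_of_mem (hd _), Unitary.mul_star_self_of_mem (hd _)]

end Matrix

def StarAlgEquiv.mapMatrix {n R A B : Type*} [Fintype n] [DecidableEq n] [CommSemiring R]
    [Semiring A] [Semiring B] [Algebra R A] [Algebra R B] [Star A] [Star B] (f : A ≃⋆ₐ[R] B) :
    Matrix n n A ≃⋆ₐ[R] Matrix n n B :=
  .ofAlgEquiv f.toAlgEquiv.mapMatrix fun x => by ext; simp [map_star]

section CornerSwap

variable {n m : ℕ}

def cornerSwap : Equiv.Perm (Fin n × Fin m) :=
  Function.Involutive.toPerm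
    (fun p => if h : (p.1 : ℕ) < m ∧ (p.2 : ℕ) < n then (⟨p.2, h.2⟩, ⟨p.1, h.1⟩) else p)
    (by rintro ⟨i, l⟩; by_cases h : (i : ℕ) < m ∧ (l : ℕ) < n <;> simp [h])

lemma cornerSwap_apply_of_lt {i : Fin n} {l : Fin m} (hi : (i : ℕ) < m) (hl : (l : ℕ) < n) :
    cornerSwap (i, l) = (⟨l, hl⟩, ⟨i, hi⟩) :=
  dif_pos ⟨hi, hl⟩

def diagIndicator (R : Type*) [Zero R] [One R] (n m : ℕ) : Fin n × Fin m → R :=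
  fun p => if (p.1 : ℕ) = p.2 then 1 else 0

lemma sum_diagIndicator (R : Type*) [AddCommMonoidWithOne R] :
    ∑ p, diagIndicator R n m p = min n m := by
  have hrow (i : Fin n) :
      ∑ k : Fin m, (if (i : ℕ) = k then (1 : R) else 0) = if (i : ℕ) < m then 1 else 0 := by
    rw [Fin.sum_univ_eq_sum_range (fun k => if (i : ℕ) = k then (1 : R) else 0), sum_ite_eq]
    simp only [mem_range]
  rw [Fintype.sum_prod_type]
  simp only [diagIndicator, hrow]
  rw [sum_boole, Fin.card_filter_val_lt]

lemma star_diagIndicator_mul_partialTranspose_cornerSwap (p q : Fin n × Fin m) :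
    star (diagIndicator ℂ n m p) *
        (partialTranspose ((cornerSwap (n := n) (m := m)).permMatrix ℂ) p q *
          diagIndicator ℂ n m q) =
      diagIndicator ℂ n m p * diagIndicator ℂ n m q := by
  obtain ⟨i, k⟩ := p
  obtain ⟨j, l⟩ := q
  by_cases hp : (i : ℕ) = k
  · by_cases hq : (j : ℕ) = l
    · have hswap : cornerSwap (i, l) = (j, k) := by
        rw [cornerSwap_apply_of_lt (hp ▸ k.isLt) (hq ▸ j.isLt)]
        ext <;> simp [hp, hq]
      simp [diagIndicator, partialTranspose, hp, hq, hswap]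
    · simp [diagIndicator, hq]
  · simp [diagIndicator, hp]

lemma min_le_l2_opNorm_partialTranspose_cornerSwap :
    ((min n m : ℕ) : ℝ) ≤ ‖partialTranspose ((cornerSwap (n := n) (m := m)).permMatrix ℂ)‖ := by
  have hform : star (diagIndicator ℂ n m) ⬝ᵥ
      partialTranspose ((cornerSwap (n := n) (m := m)).permMatrix ℂ) *ᵥ diagIndicator ℂ n m =
        ((min n m : ℕ) : ℂ) ^ 2 := by
    simp only [dotProduct, mulVec, Pi.star_apply, mul_sum,
      star_diagIndicator_mul_partialTranspose_cornerSwap]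
    rw [← sum_mul_sum, sum_diagIndicator, sq]
  have hnorm : ‖toLp 2 (diagIndicator ℂ n m)‖ ^ 2 = min n m := by
    rw [EuclideanSpace.norm_sq_eq, ← sum_diagIndicator ℝ]
    simp [diagIndicator, apply_ite]
  have := norm_star_dotProduct_mulVec_le
    (partialTranspose ((cornerSwap (n := n) (m := m)).permMatrix ℂ))
    (toLp 2 (diagIndicator ℂ n m)) (toLp 2 (diagIndicator ℂ n m))
  rw [ofLp_toLp, hform, ← sq, hnorm, norm_pow, Complex.norm_natCast, sq] at this
  rcases (Nat.cast_nonneg (α := ℝ) (min n m)).eq_or_lt with h0 | h0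
  · rw [← h0]
    exact norm_nonneg _
  · exact le_of_mul_le_mul_right this h0

end CornerSwap

def IsTROAntiHom {A : Type*} [Mul A] [Star A] (S : A → A) : Prop :=
  ∀ a b c, S (a * star b * c) = S c * star (S b) * S a

namespace IsTROAntiHom

section Monoid

variable {A : Type*} [Monoid A] [StarMul A] {S : A → A}

lemma map_mul (h : IsTROAntiHom S) (x y : A) : S (x * y) = S y * star (S 1) * S x := by
  simpa using h x 1 y

lemma map_star (h : IsTROAntiHom S) (b : A) : S (star b) = S 1 * star (S b) * S 1 := by
  simpa using h 1 b 1

lemma map_one_mem_unitary (h : IsTROAntiHom S) (hS : Function.Surjective S) :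
    S 1 ∈ unitary A := by
  obtain ⟨a, ha⟩ := hS 1
  refine ⟨?_, ?_⟩
  · simpa [ha] using (h 1 1 a).symm
  · simpa [ha] using (h a 1 1).symm

end Monoid

section Matrix

variable {ι R : Type*} [Fintype ι] [DecidableEq ι] [CommRing R] [StarRing R]
  {S : Matrix ι ι R →ₗ[R] Matrix ι ι R}

noncomputable def starAlgEquiv (h : IsTROAntiHom S) (hS : Function.Bijective S) :
    Matrix ι ι R ≃⋆ₐ[R] Matrix ι ι R :=
  have hu := h.map_one_mem_unitary hS.2
  .ofAlgEquiv (.ofBijective (.ofLinearMap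
      (LinearMap.mulLeft R (star (S 1)) ∘ₗ S ∘ₗ (transposeLinearEquiv ι ι R R).toLinearMap)
      (by simp [Unitary.star_mul_self_of_mem hu])
      (fun b c => by simp [h.map_mul, mul_assoc]))
    ((IsUnit.isUnit_iff_mulLeft_bijective.mp (Unitary.isUnit_coe (U := star ⟨_, hu⟩))).comp
      (hS.comp (transposeLinearEquiv ι ι R R).bijective)))
    (fun b => by
      change star (S 1) * S (star bᵀ) = star (star (S 1) * S bᵀ)
      rw [h.map_star, star_mul, star_star, ← mul_assoc, ← mul_assoc,
        Unitary.star_mul_self_of_mem hu, one_mul])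

lemma starAlgEquiv_apply (h : IsTROAntiHom S) (hS : Function.Bijective S) (b : Matrix ι ι R) :
    h.starAlgEquiv hS b = star (S 1) * S bᵀ :=
  rfl

lemma eq_mul_starAlgEquiv_transpose (h : IsTROAntiHom S) (hS : Function.Bijective S)
    (b : Matrix ι ι R) : S b = S 1 * h.starAlgEquiv hS bᵀ := by
  rw [starAlgEquiv_apply, transpose_transpose, ← mul_assoc,
    Unitary.mul_star_self_of_mem (h.map_one_mem_unitary hS.2), one_mul]

lemma map_map_eq_diagonal_mul {α : Type*} [Fintype α] [DecidableEq α] (h : IsTROAntiHom S)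
    (hS : Function.Bijective S) (x : Matrix α α (Matrix ι ι R)) :
    x.map S = diagonal (fun _ => S 1) * (x.map transpose).map (h.starAlgEquiv hS) := by
  ext i j : 2
  rw [diagonal_mul, map_apply, map_apply, map_apply, h.eq_mul_starAlgEquiv_transpose hS]

end Matrix

lemma norm_compStarAlgEquiv_map {α ι : Type*} [Fintype α] [DecidableEq α] [Fintype ι]
    [DecidableEq ι] {S : Matrix ι ι ℂ →ₗ[ℂ] Matrix ι ι ℂ} (h : IsTROAntiHom S)
    (hS : Function.Bijective S) (x : Matrix α α (Matrix ι ι ℂ)) :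
    ‖compStarAlgEquiv α ι ℂ (x.map S)‖ = ‖partialTranspose (compStarAlgEquiv α ι ℂ x)‖ := by
  have hU : compStarAlgEquiv α ι ℂ (diagonal fun _ => S 1) ∈ unitary _ :=
    Unitary.map_mem _ (diagonal_mem_unitary fun _ => h.map_one_mem_unitary hS.2)
  rw [h.map_map_eq_diagonal_mul hS, _root_.map_mul, CStarRing.norm_coe_unitary_mul ⟨_, hU⟩,
    ← compStarAlgEquiv_map_transpose]
  have := StarAlgEquiv.norm_map ((compStarAlgEquiv α ι ℂ).symm.trans
    ((h.starAlgEquiv hS).mapMatrix.trans (compStarAlgEquiv α ι ℂ)))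
    (compStarAlgEquiv α ι ℂ (x.map transpose))
  rwa [StarAlgEquiv.trans_apply, StarAlgEquiv.trans_apply, StarAlgEquiv.symm_apply_apply] at this

end IsTROAntiHom

theorem norm_amplification_tro_antiIso_matrix_general
    (m n : ℕ)
    (S : Matrix (Fin m) (Fin m) ℂ →ₗ[ℂ] Matrix (Fin m) (Fin m) ℂ)
    (hbij : Function.Bijective S)
    (hanti : ∀ a b c : Matrix (Fin m) (Fin m) ℂ,
      S (a * star b * c) = S c * star (S b) * S a)
    (ν : Matrix (Fin n) (Fin n) (Matrix (Fin m) (Fin m) ℂ) → ℝ)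
    (hν : IsCStarNorm ν) :
    sSup {r : ℝ | ∃ x, ν x ≤ 1 ∧ r = ν (x.map ⇑S)} = min (n : ℝ) (m : ℝ) := by
  let E := compStarAlgEquiv (Fin n) (Fin m) ℂ
  have hνE (x) : ν x = ‖E x‖ := hν.apply_eq_norm E x
  have hνS (x) : ν (x.map S) = ‖partialTranspose (E x)‖ := by
    rw [hνE]
    exact IsTROAntiHom.norm_compStarAlgEquiv_map hanti hbij x
  have hPT (y : Matrix (Fin n × Fin m) (Fin n × Fin m) ℂ) :
      ‖partialTranspose y‖ ≤ min (n : ℝ) m * ‖y‖ := by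
    simpa using l2_opNorm_partialTranspose_le_min y
  have hP : ‖(cornerSwap (n := n) (m := m)).permMatrix ℂ‖ ≤ 1 := permMatrix_l2_opNorm_le _
  refine IsGreatest.csSup_eq ⟨⟨E.symm (cornerSwap.permMatrix ℂ), ?_, ?_⟩, ?_⟩
  · rwa [hνE, StarAlgEquiv.apply_symm_apply]
  · rw [hνS, StarAlgEquiv.apply_symm_apply]
    refine le_antisymm ?_ ((hPT _).trans (mul_le_of_le_one_right (by positivity) hP))
    exact_mod_cast min_le_l2_opNorm_partialTranspose_cornerSwap
  · rintro r ⟨x, hx, rfl⟩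
    rw [hνS]
    exact (hPT _).trans (mul_le_of_le_one_right (by positivity) (hνE x ▸ hx))

/-- If `S : M_m(ℂ) → M_m(ℂ)` is a bijective linear TRO
anti-isomorphism, then for every `n ≥ 1` the norm of the `n`-th amplification
`S_n : M_n(M_m(ℂ)) → M_n(M_m(ℂ))` (with respect to the unique C*-norm on
`M_n(M_m(ℂ))`) equals `min n m`. -/
theorem norm_amplification_tro_antiIso_matrix
    (m n : ℕ) (hm : 1 ≤ m) (hn : 1 ≤ n)
    (S : Matrix (Fin m) (Fin m) ℂ →ₗ[ℂ] Matrix (Fin m) (Fin m) ℂ)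
    (hbij : Function.Bijective S)
    (hanti : ∀ a b c : Matrix (Fin m) (Fin m) ℂ,
      S (a * star b * c) = S c * star (S b) * S a)
    (ν : Matrix (Fin n) (Fin n) (Matrix (Fin m) (Fin m) ℂ) → ℝ)
    (hν : IsCStarNorm ν) :
    sSup {r : ℝ | ∃ x, ν x ≤ 1 ∧ r = ν (x.map ⇑S)} = min (n : ℝ) (m : ℝ) :=
  norm_amplification_tro_antiIso_matrix_general m n S hbij hanti ν hν
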